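/- arXiv:1611.07573 — 2 statements merged into one kernel-verified Lean document; each statement's English description precedes it below -/
import Mathlib

section
/- Let T be a finite undirected tree with symmetric edge costs and ρ > 0, and suppose p, q : V → ℝ satisfy Σ_v p(v) = Σ_v q(v). Then tEMD^ρ_r(p,q) is independent of the choice of root r: for any two vertices r₀, r₁, tEMD^ρ_{r₀}(p,q) = tEMD^ρ_{r₁}(p,q). -/
open SimpleGraph Finset

variable {V : Type} [Fintype V] [DecidableEq V]

/-- Rooting a tree at `r`: the parent of `v` is the second vertex on the unique
path from `v` to `r` (and `r` itself when `v = r`). -/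
noncomputable def treeParent (G : SimpleGraph V) (hG : G.IsTree) (r v : V) : V :=
  (hG.existsUnique_path v r).choose.getVert 1

/-- The children of `v` in the tree rooted at `r`. -/
noncomputable def treeChildren (G : SimpleGraph V) (hG : G.IsTree) (r v : V) : Finset V :=
  Finset.univ.filter fun c => c ≠ r ∧ treeParent G hG r c = v

/-- `φ` is the flow for `p, q` in the tree rooted at `r` if it satisfies the recursion
`φ v = p v − q v + Σ_{c child of v} φ c`. -/
def IsFlow (G : SimpleGraph V) (hG : G.IsTree) (r : V) (p q φ : V → ℝ) : Prop :=
  ∀ v, φ v = p v - q v + ∑ c ∈ treeChildren G hG r v, φ c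

/-- The tree earth mover's distance for the rooting at `r`, edge costs `M`,
exponent `ρ`, and flow `φ`. -/
noncomputable def tEMD (G : SimpleGraph V) (hG : G.IsTree) (M : V → V → ℝ) (ρ : ℝ)
    (r : V) (φ : V → ℝ) : ℝ :=
  ∑ v ∈ Finset.univ.erase r, M v (treeParent G hG r v) * |φ v| ^ ρ

/-!
Write `d = p - q`. Unwinding the recursion, the flow through a vertex `v ≠ r` is the total of
`d` over the vertices whose path to `r` passes through `v`; these are the vertices on `v`'s
side of the edge `{v, parent v}`. Removing an edge splits the tree into two sides, and as `d`
has total zero, the two sides carry opposite totals. So the term of the edge `{v, parent v}` in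
`tEMD` does not depend on which endpoint is the child, and since `v ↦ {v, parent v}` is a
bijection from the non-root vertices onto the edges for every root, `tEMD` is one and the same
sum over the edges of the tree.
-/

section TreePath

variable {α : Type*} {G : SimpleGraph α} (hG : G.IsTree)

noncomputable def treePath (u v : α) : G.Walk u v := (hG.existsUnique_path u v).choose

lemma treePath_isPath (u v : α) : (treePath hG u v).IsPath :=
  (hG.existsUnique_path u v).choose_spec.1

lemma eq_treePath {u v : α} {p : G.Walk u v} (hp : p.IsPath) : p = treePath hG u v :=
  (hG.existsUnique_path u v).choose_spec.2 p hp

lemma treePath_self (u : α) : treePath hG u u = .nil :=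
  (eq_treePath hG .nil).symm

lemma treePath_of_adj {v w : α} (h : G.Adj v w) : treePath hG v w = h.toWalk :=
  (eq_treePath hG (Walk.IsPath.of_adj h)).symm

lemma mem_support_treePath_comm {u v x : α} :
    x ∈ (treePath hG u v).support ↔ x ∈ (treePath hG v u).support := by
  rw [← eq_treePath hG (treePath_isPath hG u v).reverse, Walk.support_reverse, List.mem_reverse]

lemma support_treePath_subset {u v : α} (p : G.Walk u v) :
    (treePath hG u v).support ⊆ p.support := by
  classical
  rw [← eq_treePath hG p.bypass_isPath]
  exact p.support_bypass_subset_support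

lemma treePath_eq_append {u v x : α} (hx : x ∈ (treePath hG u v).support) :
    (treePath hG u x).append (treePath hG x v) = treePath hG u v := by
  classical
  have hpath := treePath_isPath hG u v
  rw [← eq_treePath hG (hpath.takeUntil hx), ← eq_treePath hG (hpath.dropUntil hx)]
  exact (treePath hG u v).take_spec hx

lemma notMem_support_treePath_of_mem_tail {u v x y : α} (hx : x ∈ (treePath hG u v).support)
    (hy : y ∈ (treePath hG x v).support.tail) : y ∉ (treePath hG u x).support := by
  have hnodup := (treePath_isPath hG u v).support_nodup
  rw [← treePath_eq_append hG hx, Walk.support_append] at hnodup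
  exact fun h => List.disjoint_of_nodup_append hnodup h hy

lemma mem_support_treePath_iff_notMem {v w : α} (h : G.Adj v w) (u : α) :
    v ∈ (treePath hG u w).support ↔ w ∉ (treePath hG u v).support := by
  refine ⟨fun hv => notMem_support_treePath_of_mem_tail hG hv ?_, fun hw => ?_⟩
  · simp [treePath_of_adj hG h]
  · rw [← eq_treePath hG ((treePath_isPath hG u v).concat hw h), Walk.support_concat]
    simp

end TreePath

section TreeParent

variable {α : Type} {G : SimpleGraph α} (hG : G.IsTree)

lemma treeParent_eq_getVert (r v : α) : treeParent G hG r v = (treePath hG v r).getVert 1 := rfl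

lemma treeParent_self (r : α) : treeParent G hG r r = r := by
  simp [treeParent_eq_getVert, treePath_self]

lemma treePath_eq_cons {r v : α} (hv : v ≠ r) :
    ∃ h : G.Adj v (treeParent G hG r v),
      treePath hG v r = .cons h (treePath hG (treeParent G hG r v) r) := by
  have hnil : ¬ (treePath hG v r).Nil := Walk.not_nil_of_ne hv
  refine ⟨Walk.adj_snd hnil, ?_⟩
  conv_lhs => rw [← (treePath hG v r).cons_tail_eq hnil]
  rw [eq_treePath hG (treePath_isPath hG v r).tail]
  rfl

lemma adj_treeParent {r v : α} (hv : v ≠ r) : G.Adj v (treeParent G hG r v) :=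
  (treePath_eq_cons hG hv).1

lemma mem_support_treePath_iff_of_ne {r v : α} (hv : v ≠ r) (x : α) :
    x ∈ (treePath hG v r).support ↔
      x = v ∨ x ∈ (treePath hG (treeParent G hG r v) r).support := by
  obtain ⟨h, hcons⟩ := treePath_eq_cons hG hv
  rw [hcons, Walk.support_cons, List.mem_cons]

lemma notMem_support_treePath_treeParent {r v : α} (hv : v ≠ r) :
    v ∉ (treePath hG (treeParent G hG r v) r).support := by
  obtain ⟨h, hcons⟩ := treePath_eq_cons hG hv
  have hpath := treePath_isPath hG v r
  rw [hcons, Walk.cons_isPath_iff] at hpath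
  exact hpath.2

lemma ne_of_mem_support_treePath {r v x : α} (hx : x ∈ (treePath hG v r).support)
    (hxv : x ≠ v) : v ≠ r := by
  rintro rfl
  rw [treePath_self, Walk.support_nil, List.mem_singleton] at hx
  exact hxv hx

lemma treeParent_eq_of_notMem {r v w : α} (h : G.Adj v w)
    (hv : v ∉ (treePath hG w r).support) : treeParent G hG r v = w := by
  rw [treeParent_eq_getVert, ← eq_treePath hG ((treePath_isPath hG w r).cons hv)]
  exact Walk.snd_cons _ h

lemma treeParent_treeParent_ne {r v : α} (hv : v ≠ r) :
    treeParent G hG r (treeParent G hG r v) ≠ v := by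
  intro h
  by_cases hw : treeParent G hG r v = r
  · rw [hw, treeParent_self] at h
    exact hv h.symm
  · apply notMem_support_treePath_treeParent hG hv
    rw [mem_support_treePath_iff_of_ne hG hw, h]
    exact Or.inr (Walk.start_mem_support _)

lemma treeParent_eq_or_eq_of_adj (r : α) {v w : α} (h : G.Adj v w) :
    (v ≠ r ∧ treeParent G hG r v = w) ∨ (w ≠ r ∧ treeParent G hG r w = v) := by
  by_cases hv : v ∈ (treePath hG w r).support
  · have hw : w ∉ (treePath hG v r).support := by
      rw [mem_support_treePath_comm] at hv ⊢
      exact (mem_support_treePath_iff_notMem hG h r).1 hv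
    refine Or.inr ⟨?_, treeParent_eq_of_notMem hG h.symm hw⟩
    rintro rfl
    exact hw (Walk.end_mem_support _)
  · refine Or.inl ⟨?_, treeParent_eq_of_notMem hG h hv⟩
    rintro rfl
    exact hv (Walk.end_mem_support _)

lemma mem_support_treePath_treeParent_iff {r v : α} (hv : v ≠ r) (u : α) :
    v ∈ (treePath hG u (treeParent G hG r v)).support ↔ v ∈ (treePath hG u r).support := by
  obtain ⟨h, hcons⟩ := treePath_eq_cons hG hv
  constructor
  · intro hv'
    by_contra hn
    have := support_treePath_subset hG ((treePath hG u r).append (treePath hG r _)) hv'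
    rw [Walk.mem_support_append_iff] at this
    exact notMem_support_treePath_treeParent hG hv
      (mem_support_treePath_comm hG |>.1 (this.resolve_left hn))
  · intro hv'
    refine (mem_support_treePath_iff_notMem hG h u).2
      (notMem_support_treePath_of_mem_tail hG hv' ?_)
    rw [hcons, Walk.support_cons, List.tail_cons]
    exact Walk.start_mem_support _

end TreeParent

section TreeSide

variable {G : SimpleGraph V} (hG : G.IsTree)

/-- For an edge `vw`, the component of `v` once the edge is removed. -/
noncomputable def treeSide (v w : V) : Finset V :=
  univ.filter fun u => v ∈ (treePath hG u w).support

lemma mem_treeSide {v w u : V} : u ∈ treeSide hG v w ↔ v ∈ (treePath hG u w).support := by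
  simp [treeSide]

lemma compl_treeSide {v w : V} (h : G.Adj v w) : (treeSide hG v w)ᶜ = treeSide hG w v := by
  ext u
  rw [mem_compl, mem_treeSide, mem_treeSide, mem_support_treePath_iff_notMem hG h.symm]

lemma sum_treeSide_swap {β : Type*} [AddCommGroup β] {d : V → β} (hd : ∑ u, d u = 0)
    {v w : V} (h : G.Adj v w) :
    ∑ u ∈ treeSide hG w v, d u = -∑ u ∈ treeSide hG v w, d u := by
  rw [← compl_treeSide hG h, eq_neg_iff_add_eq_zero, sum_compl_add_sum, hd]

lemma treeSide_treeParent {r v : V} (hv : v ≠ r) :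
    treeSide hG v (treeParent G hG r v) = treeSide hG v r := by
  ext u
  rw [mem_treeSide, mem_treeSide, mem_support_treePath_treeParent_iff hG hv]

/-- The flow recursion telescopes over the subtree below `v`: the children of its vertices are
its vertices other than `v`. -/
lemma IsFlow.eq_sum_treeSide {r : V} {p q φ : V → ℝ} (hφ : IsFlow G hG r p q φ) (v : V) :
    φ v = ∑ u ∈ treeSide hG v r, (p u - q u) := by
  set D := treeSide hG v r
  have hvD : v ∈ D := (mem_treeSide hG).2 (Walk.start_mem_support _)
  have hchildren :
      ∀ u ∈ D, treeChildren G hG r u = (D.erase v).filter (treeParent G hG r · = u) := by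
    intro u hu
    ext c
    simp only [treeChildren, D, mem_filter, mem_univ, true_and, mem_erase, mem_treeSide] at hu ⊢
    constructor
    · rintro ⟨hc, rfl⟩
      refine ⟨⟨fun hcv => ?_, (mem_support_treePath_iff_of_ne hG hc v).2 (Or.inr hu)⟩, rfl⟩
      exact notMem_support_treePath_treeParent hG hc (hcv ▸ hu)
    · rintro ⟨⟨hcv, hvc⟩, rfl⟩
      exact ⟨ne_of_mem_support_treePath hG hvc (Ne.symm hcv), rfl⟩
  have hparent : ∀ c ∈ D.erase v, treeParent G hG r c ∈ D := by
    intro c hc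
    rw [mem_erase, mem_treeSide] at hc
    have hcr := ne_of_mem_support_treePath hG hc.2 (Ne.symm hc.1)
    rw [mem_treeSide]
    exact ((mem_support_treePath_iff_of_ne hG hcr v).1 hc.2).resolve_left (Ne.symm hc.1)
  have hsum : ∑ u ∈ D, φ u = ∑ u ∈ D, (p u - q u) + ∑ c ∈ D.erase v, φ c := by
    rw [← sum_fiberwise_of_maps_to hparent, ← sum_add_distrib]
    refine sum_congr rfl fun u hu => ?_
    rw [hφ u, hchildren u hu]
  rw [← add_sum_erase D φ hvD] at hsum
  linarith

lemma tEMD_eq_sum_treeSide {r : V} {p q φ : V → ℝ} (hφ : IsFlow G hG r p q φ)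
    (M : V → V → ℝ) (ρ : ℝ) :
    tEMD G hG M ρ r φ = ∑ v ∈ univ.erase r, M v (treeParent G hG r v) *
      |∑ u ∈ treeSide hG v (treeParent G hG r v), (p u - q u)| ^ ρ := by
  refine sum_congr rfl fun v hv => ?_
  rw [hφ.eq_sum_treeSide, treeSide_treeParent hG (ne_of_mem_erase hv)]

end TreeSide

section TreeEdges

variable {G : SimpleGraph V} (hG : G.IsTree)

lemma sum_erase_treeParent_eq_sum_edgeFinset [DecidableRel G.Adj]
    {β : Type*} [AddCommMonoid β] (r : V) (f : Sym2 V → β) :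
    ∑ v ∈ univ.erase r, f s(v, treeParent G hG r v) = ∑ e ∈ G.edgeFinset, f e := by
  refine sum_nbij (fun v => s(v, treeParent G hG r v)) (fun v hv => ?_) (fun v hv v' hv' h => ?_)
    (fun e he => ?_) fun _ _ => rfl
  · exact mem_edgeFinset.2 (adj_treeParent hG (ne_of_mem_erase hv))
  · rcases Sym2.eq_iff.1 h with ⟨hvv', -⟩ | ⟨hv'', hv'⟩
    · exact hvv'
    · refine absurd ?_ (treeParent_treeParent_ne hG (ne_of_mem_erase hv))
      rw [hv', hv'']
  · induction e using Sym2.ind with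
    | _ v w =>
      rcases treeParent_eq_or_eq_of_adj hG r (mem_edgeFinset.1 he) with ⟨hv, hw⟩ | ⟨hw, hv⟩
      · exact ⟨v, mem_erase.2 ⟨hv, mem_univ v⟩, congrArg (s(v, ·)) hw⟩
      · exact ⟨w, mem_erase.2 ⟨hw, mem_univ w⟩,
          (congrArg (s(w, ·)) hv).trans Sym2.eq_swap⟩

lemma sum_erase_treeParent_eq_of_adj_symm {β : Type*} [AddCommMonoid β]
    {F : V → V → β} (hF : ∀ v w, G.Adj v w → F v w = F w v) (r r' : V) :
    ∑ v ∈ univ.erase r, F v (treeParent G hG r v)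
      = ∑ v ∈ univ.erase r', F v (treeParent G hG r' v) := by
  classical
  -- extended by zero off the edges, `F` is symmetric and so descends to `Sym2 V`
  let f : Sym2 V → β := Sym2.lift ⟨fun v w => if G.Adj v w then F v w else 0, fun v w => by
    by_cases h : G.Adj v w
    · simp [h, h.symm, hF v w h]
    · have h' : ¬ G.Adj w v := fun h' => h h'.symm
      simp [h, h']⟩
  have hf : ∀ r, ∀ v ∈ univ.erase r,
      F v (treeParent G hG r v) = f s(v, treeParent G hG r v) := fun r v hv => by
    simp [f, adj_treeParent hG (ne_of_mem_erase hv)]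
  rw [sum_congr rfl (hf r), sum_congr rfl (hf r'), sum_erase_treeParent_eq_sum_edgeFinset,
    sum_erase_treeParent_eq_sum_edgeFinset]

end TreeEdges

theorem tEMD_root_independent_general (G : SimpleGraph V) (hG : G.IsTree)
    (M : V → V → ℝ) (hMsymm : ∀ a b, M a b = M b a)
    (ρ : ℝ)
    (r₀ r₁ : V) (p q : V → ℝ)
    (hmass : ∑ v, p v = ∑ v, q v)
    (φ₀ φ₁ : V → ℝ)
    (h₀ : IsFlow G hG r₀ p q φ₀) (h₁ : IsFlow G hG r₁ p q φ₁) :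
    tEMD G hG M ρ r₀ φ₀ = tEMD G hG M ρ r₁ φ₁ := by
  have htotal : ∑ u, (p u - q u) = 0 := by rw [sum_sub_distrib, hmass, sub_self]
  rw [tEMD_eq_sum_treeSide hG h₀, tEMD_eq_sum_treeSide hG h₁]
  refine sum_erase_treeParent_eq_of_adj_symm hG
    (F := fun v w => M v w * |∑ u ∈ treeSide hG v w, (p u - q u)| ^ ρ)
    (fun v w h => ?_) r₀ r₁
  rw [sum_treeSide_swap hG htotal h, abs_neg, hMsymm]

theorem tEMD_root_independent (G : SimpleGraph V) (hG : G.IsTree)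
    (M : V → V → ℝ) (hMsymm : ∀ a b, M a b = M b a) (hMnonneg : ∀ a b, 0 ≤ M a b)
    (ρ : ℝ) (hρ : 0 < ρ)
    (r₀ r₁ : V) (p q : V → ℝ)
    (hmass : ∑ v, p v = ∑ v, q v)
    (φ₀ φ₁ : V → ℝ)
    (h₀ : IsFlow G hG r₀ p q φ₀) (h₁ : IsFlow G hG r₁ p q φ₁) :
    tEMD G hG M ρ r₀ φ₀ = tEMD G hG M ρ r₁ φ₁ :=
  tEMD_root_independent_general G hG M hMsymm ρ r₀ r₁ p q hmass φ₀ φ₁ h₀ h₁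
end

section
/- Let T be a finite undirected tree, n₀ and n₁ adjacent vertices, and φ^A, φ^B the flows rooted at n₀ and n₁ respectively. Then for every vertex v other than n₀ and n₁, φ^A(v) = φ^B(v). -/
open SimpleGraph Finset

variable {V : Type} [Fintype V] [DecidableEq V]

/-! Away from the two roots, rerooting at an adjacent vertex leaves parents, hence children,
unchanged. The recursion defining the two flows then agrees at `v` as soon as it agrees at the
children of `v`, and since children lie farther from the root, well-founded induction from the
leaves up gives `φA v = φB v`. -/

theorem SimpleGraph.Walk.snd_append_of_not_nil {W : Type*} {G : SimpleGraph W} {u v w : W}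
    (p : G.Walk u v) (q : G.Walk v w) (hp : ¬p.Nil) : (p.append q).snd = p.snd := by
  cases p with
  | nil => exact absurd Walk.Nil.nil hp
  | cons => simp only [Walk.cons_append, Walk.snd_cons]

theorem SimpleGraph.IsTree.length_eq_dist_of_isPath {W : Type*} {G : SimpleGraph W}
    (hG : G.IsTree) {u v : W} {p : G.Walk u v} (hp : p.IsPath) : p.length = G.dist u v := by
  obtain ⟨q, hq, hql⟩ := hG.connected.exists_path_of_dist u v
  rw [(hG.existsUnique_path u v).unique hp hq, hql]

section TreeRooting

omit [Fintype V] [DecidableEq V]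

variable (G : SimpleGraph V) (hG : G.IsTree)

theorem treeParent_eq_snd {r v : V} {p : G.Walk v r} (hp : p.IsPath) :
    treeParent G hG r v = p.snd := by
  rw [treeParent, (hG.existsUnique_path v r).choose_spec.2 p hp]

theorem treeParent_of_adj {r v : V} (hadj : G.Adj r v) : treeParent G hG r v = r :=
  treeParent_eq_snd G hG (p := .cons hadj.symm .nil) (by simp [hadj.ne'])

theorem dist_treeParent_lt {r c : V} (hc : c ≠ r) :
    G.dist (treeParent G hG r c) r < G.dist c r := by
  obtain ⟨hP, -⟩ := (hG.existsUnique_path c r).choose_spec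
  set P := (hG.existsUnique_path c r).choose
  have hnil : ¬P.Nil := Walk.not_nil_of_ne hc
  have hlen := hG.length_eq_dist_of_isPath hP
  have htail := P.length_tail_add_one hnil
  have := dist_le P.tail
  rw [treeParent_eq_snd G hG hP]
  omega

variable [DecidableEq V] in
/-- The path from `v` to `n₀` either passes through `n₁` or extends to `n₁` by one edge. -/
theorem treeParent_eq_of_adj {n₀ n₁ v : V} (hadj : G.Adj n₀ n₁) (h₀ : v ≠ n₀) (h₁ : v ≠ n₁) :
    treeParent G hG n₀ v = treeParent G hG n₁ v := by
  obtain ⟨hP, -⟩ := (hG.existsUnique_path v n₀).choose_spec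
  set P := (hG.existsUnique_path v n₀).choose
  rw [treeParent_eq_snd G hG hP]
  by_cases hmem : n₁ ∈ P.support
  · rw [treeParent_eq_snd G hG (hP.takeUntil hmem), Walk.snd_takeUntil h₁.symm]
  · rw [treeParent_eq_snd G hG (hP.concat hmem hadj), Walk.concat_eq_append,
      Walk.snd_append_of_not_nil _ _ (Walk.not_nil_of_ne h₀)]

end TreeRooting

theorem mem_treeChildren {G : SimpleGraph V} {hG : G.IsTree} {r v c : V} :
    c ∈ treeChildren G hG r v ↔ c ≠ r ∧ treeParent G hG r c = v := by
  simp [treeChildren]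

section TreeChildren

variable (G : SimpleGraph V) (hG : G.IsTree)

theorem wellFounded_mem_treeChildren (r : V) :
    WellFounded fun c v => c ∈ treeChildren G hG r v :=
  Subrelation.wf
    (fun hc => (mem_treeChildren.1 hc).2 ▸ dist_treeParent_lt G hG (mem_treeChildren.1 hc).1)
    (Finite.wellFounded_of_trans_of_irrefl (InvImage (· > ·) (G.dist · r)))

theorem ne_of_mem_treeChildren_of_adj {n₀ n₁ v c : V} (hadj : G.Adj n₀ n₁) (h₀ : v ≠ n₀)
    (hc : c ∈ treeChildren G hG n₀ v) : c ≠ n₁ := by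
  rintro rfl
  exact h₀ ((mem_treeChildren.1 hc).2 ▸ treeParent_of_adj G hG hadj)

theorem treeChildren_eq_of_adj {n₀ n₁ v : V} (hadj : G.Adj n₀ n₁) (h₀ : v ≠ n₀) (h₁ : v ≠ n₁) :
    treeChildren G hG n₀ v = treeChildren G hG n₁ v := by
  ext c
  constructor
  · intro hc
    obtain ⟨hc₀, hpar⟩ := mem_treeChildren.1 hc
    have hc₁ := ne_of_mem_treeChildren_of_adj G hG hadj h₀ hc
    exact mem_treeChildren.2 ⟨hc₁, treeParent_eq_of_adj G hG hadj hc₀ hc₁ ▸ hpar⟩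
  · intro hc
    obtain ⟨hc₁, hpar⟩ := mem_treeChildren.1 hc
    have hc₀ := ne_of_mem_treeChildren_of_adj G hG hadj.symm h₁ hc
    exact mem_treeChildren.2 ⟨hc₀, (treeParent_eq_of_adj G hG hadj hc₀ hc₁).symm ▸ hpar⟩

end TreeChildren

theorem flow_eq_away_from_roots (G : SimpleGraph V) (hG : G.IsTree)
    (n₀ n₁ : V) (hadj : G.Adj n₀ n₁) (p q : V → ℝ)
    (φA φB : V → ℝ)
    (hA : IsFlow G hG n₀ p q φA) (hB : IsFlow G hG n₁ p q φB) :
    ∀ v, v ≠ n₀ → v ≠ n₁ → φA v = φB v := by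
  intro v
  induction v using (wellFounded_mem_treeChildren G hG n₀).induction with
  | _ v ih =>
    intro h₀ h₁
    rw [hA v, hB v, ← treeChildren_eq_of_adj G hG hadj h₀ h₁]
    refine congrArg _ (Finset.sum_congr rfl fun c hc => ?_)
    exact ih c hc (mem_treeChildren.1 hc).1 (ne_of_mem_treeChildren_of_adj G hG hadj h₀ hc)
end
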